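/- arXiv:1101.3635 — 4 statements merged into one kernel-verified Lean document; each statement's English description precedes it below -/
import Mathlib

section
/- Let K ⊂ ℝ² be a nondegenerate triangle with vertices a₁, a₂, a₃, area |K|, and edge vectors ℓ₁ = a₃ − a₂, ℓ₂ = a₁ − a₃, ℓ₃ = a₂ − a₁ (indices taken cyclically mod 3). Let u : ℝ² → ℝ be a quadratic polynomial with constant Hessian matrix H, and let u_I be the unique affine function agreeing with u at a₁, a₂, a₃. Then ∫_K |∇(u − u_I)(x)|² dx = (1/(48|K|)) · Σ_{i=1}^{3} c_i² |ℓ_i|², where c_i = ℓ_{i+1} · (H ℓ_{i+2}). -/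
/-!
The error `e = u - u_I` is a quadratic with Hessian `H` vanishing at the three vertices, so its
gradient `g` is affine and `‖g‖²` is a quadratic polynomial. The edge-midpoint quadrature rule
`∫_K q = |K|/3 · Σᵢ q(mᵢ)` is exact for quadratics, so only `g(mᵢ)` matters. Since `e` vanishes
at both ends of edge `i`, `g(mᵢ) ⟂ ℓᵢ`; comparing `e` at the two ends of edge `i+1` gives
`g(mᵢ) · ℓ_{i+1} = cᵢ/2`. In the plane a vector orthogonal to `ℓᵢ` is determined by one more
component, whence `‖g(mᵢ)‖ · 2|K| = |cᵢ|/2 · |ℓᵢ|`, and summing gives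
`|K|/3 · Σᵢ cᵢ²|ℓᵢ|²/(16|K|²)`.
-/

open MeasureTheory RealInnerProductSpace

/-- The bilinear form `v ⬝ (H w)` induced by a `2 × 2` real matrix `H` on `ℝ²`. -/
noncomputable def matBilin (H : Matrix (Fin 2) (Fin 2) ℝ)
    (v w : EuclideanSpace ℝ (Fin 2)) : ℝ :=
  ∑ i : Fin 2, ∑ j : Fin 2, v i * H i j * w j

open Set

local notation "ℝ²" => EuclideanSpace ℝ (Fin 2)

section Quadratic

variable {F : Type*} [NormedAddCommGroup F] [InnerProductSpace ℝ F]

noncomputable def quadratic (A : F →L[ℝ] F) (d : F) (k : ℝ) (x : F) : ℝ :=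
  1 / 2 * ⟪x, A x⟫ + ⟪d, x⟫ + k

variable {A : F →L[ℝ] F} (hA : (A : F →ₗ[ℝ] F).IsSymmetric) (d : F) (k : ℝ)
include hA

theorem hasGradientAt_quadratic [CompleteSpace F] (x : F) :
    HasGradientAt (quadratic A d k) (A x + d) x := by
  rw [hasGradientAt_iff_hasFDerivAt]
  have hq := (hasFDerivAt_id x).inner ℝ (A.hasFDerivAt (x := x))
  refine (((hq.const_mul (1 / 2)).add ((innerSL ℝ d).hasFDerivAt)).add_const k).congr_fderiv ?_
  ext v
  have hsymm : ⟪A x, v⟫ = ⟪x, A v⟫ := hA x v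
  have hcomm : ⟪v, A x⟫ = ⟪A x, v⟫ := real_inner_comm _ _
  simp only [one_div, id_eq, add_apply, smul_apply, ContinuousLinearMap.comp_apply,
    ContinuousLinearMap.prod_apply, ContinuousLinearMap.id_apply, fderivInnerCLM_apply, smul_eq_mul,
    coe_innerSL_apply, map_add, InnerProductSpace.toDual_apply_apply, add_left_inj]
  linarith

theorem quadratic_sub_quadratic (x y : F) :
    quadratic A d k y - quadratic A d k x = ⟪A x + d, y - x⟫ + 1 / 2 * ⟪y - x, A (y - x)⟫ := by
  have hsymm : ⟪A x, y⟫ = ⟪x, A y⟫ := hA x y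
  simp only [quadratic, map_sub, inner_sub_left, inner_sub_right, inner_add_left]
  rw [real_inner_comm x (A x), real_inner_comm (A x) y, hsymm]
  ring

theorem inner_gradient_quadratic_eq_of_eq {p r : F}
    (h : quadratic A d k p = quadratic A d k r) (m : F) :
    ⟪A m + d, r - p⟫ = ⟪m - midpoint ℝ p r, A (r - p)⟫ := by
  have hpr := quadratic_sub_quadratic hA d k p r
  have hm : ⟪A (m - p), r - p⟫ = ⟪m - p, A (r - p)⟫ := hA (m - p) (r - p)
  rw [h, sub_self] at hpr
  have hmid : m - midpoint ℝ p r = (m - p) - (1 / 2 : ℝ) • (r - p) := by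
    rw [midpoint_eq_smul_add, invOf_eq_inv]
    module
  rw [hmid, inner_sub_left, real_inner_smul_left, ← hm,
    show A m + d = (A p + d) + A (m - p) by rw [map_sub]; abel, inner_add_left]
  linarith

end Quadratic

theorem AffineMap.exists_eq_inner_add {F : Type*} [NormedAddCommGroup F] [InnerProductSpace ℝ F]
    [FiniteDimensional ℝ F] (f : F →ᵃ[ℝ] ℝ) : ∃ w : F, ∀ y, f y = ⟪w, y⟫ + f 0 := by
  refine ⟨(InnerProductSpace.toDual ℝ F).symm (LinearMap.toContinuousLinearMap f.linear),
    fun y => ?_⟩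
  rw [InnerProductSpace.toDual_symm_apply]
  simpa using f.map_vadd 0 y

theorem norm_add_smul_add_smul_sq {F : Type*} [NormedAddCommGroup F] [InnerProductSpace ℝ F]
    (x y z : F) (s t : ℝ) :
    ‖x + s • y + t • z‖ ^ 2 = ‖x‖ ^ 2 + 2 * ⟪x, y⟫ * s + 2 * ⟪x, z⟫ * t + ‖y‖ ^ 2 * s ^ 2
      + 2 * ⟪y, z⟫ * (s * t) + ‖z‖ ^ 2 * t ^ 2 := by
  simp only [← real_inner_self_eq_norm_sq, inner_add_left, inner_add_right, real_inner_smul_left,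
    real_inner_smul_right]
  rw [real_inner_comm x y, real_inner_comm x z, real_inner_comm y z]
  ring

theorem setIntegral_image_add_linear {E G : Type*} [NormedAddCommGroup E] [NormedSpace ℝ E]
    [FiniteDimensional ℝ E] [MeasurableSpace E] [BorelSpace E] (μ : Measure E)
    [μ.IsAddHaarMeasure] [NormedAddCommGroup G] [NormedSpace ℝ G] {L : E →L[ℝ] E}
    (hL : Function.Injective L) (p : E) {s : Set E} (hs : MeasurableSet s) (f : E → G) :
    ∫ x in (fun t => p + L t) '' s, f x ∂μ = |L.det| • ∫ t in s, f (p + L t) ∂μ := by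
  rw [integral_image_eq_integral_abs_det_fderiv_smul μ hs
    (fun t _ => (L.hasFDerivAt.const_add p).hasFDerivWithinAt)
    (fun x _ y _ h => hL (add_left_cancel h)), integral_smul]

section RefTriangle

def refTriangle : Set (ℝ × ℝ) := {p | 0 ≤ p.1 ∧ 0 ≤ p.2 ∧ p.1 + p.2 ≤ 1}

theorem isCompact_refTriangle : IsCompact refTriangle := by
  refine (isCompact_Icc (a := ((0 : ℝ), (0 : ℝ))) (b := (1, 1))).of_isClosed_subset ?_ ?_
  · exact (isClosed_le continuous_const continuous_fst).inter
      ((isClosed_le continuous_const continuous_snd).inter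
        (isClosed_le (continuous_fst.add continuous_snd) continuous_const))
  · rintro p ⟨h1, h2, h3⟩
    exact ⟨⟨h1, h2⟩, by linarith, by linarith⟩

theorem indicator_refTriangle_apply (f : ℝ × ℝ → ℝ) (x y : ℝ) :
    refTriangle.indicator f (x, y) =
      (Icc 0 1).indicator (fun x => (Icc 0 (1 - x)).indicator (fun y => f (x, y)) y) x := by
  simp only [indicator_apply, refTriangle, mem_ofPred_eq, mem_Icc]
  split_ifs <;> first | rfl | (exfalso; grind)

theorem setIntegral_refTriangle_eq_iterated {f : ℝ × ℝ → ℝ} (hf : Continuous f) :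
    ∫ p in refTriangle, f p = ∫ x in (0 : ℝ)..1, ∫ y in (0 : ℝ)..(1 - x), f (x, y) := by
  have hT : MeasurableSet refTriangle := isCompact_refTriangle.isClosed.measurableSet
  have hint : Integrable (refTriangle.indicator f) (volume.prod volume) := by
    rw [← Measure.volume_eq_prod]
    exact (hf.continuousOn.integrableOn_compact isCompact_refTriangle).integrable_indicator hT
  rw [← integral_indicator hT, Measure.volume_eq_prod, integral_prod _ hint,
    intervalIntegral.integral_of_le zero_le_one, setIntegral_congr_set Ioc_ae_eq_Icc,
    ← integral_indicator measurableSet_Icc]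
  congr 1 with x
  simp only [indicator_refTriangle_apply]
  by_cases hx : x ∈ Icc (0 : ℝ) 1
  · simp only [indicator_of_mem hx]
    rw [integral_indicator measurableSet_Icc, ← setIntegral_congr_set Ioc_ae_eq_Icc,
      ← intervalIntegral.integral_of_le (by linarith [hx.2])]
  · simp [indicator_of_notMem hx]

theorem integral_cubic (a c₀ c₁ c₂ c₃ : ℝ) :
    ∫ y in (0 : ℝ)..a, (c₀ + c₁ * y + c₂ * y ^ 2 + c₃ * y ^ 3) =
      c₀ * a + c₁ * a ^ 2 / 2 + c₂ * a ^ 3 / 3 + c₃ * a ^ 4 / 4 := by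
  have hi : ∀ (c : ℝ) (n : ℕ), IntervalIntegrable (fun y : ℝ => c * y ^ n) volume 0 a :=
    fun c n => (continuous_const.mul (continuous_pow n)).intervalIntegrable _ _
  rw [intervalIntegral.integral_add
      (by simpa using ((hi c₀ 0).add (hi c₁ 1)).add (hi c₂ 2)) (hi c₃ 3),
    intervalIntegral.integral_add (by simpa using (hi c₀ 0).add (hi c₁ 1)) (hi c₂ 2),
    intervalIntegral.integral_add intervalIntegrable_const (by simpa using hi c₁ 1)]
  have h₁ : ∫ y in (0 : ℝ)..a, c₁ * y = c₁ * a ^ 2 / 2 := by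
    rw [intervalIntegral.integral_const_mul, integral_id]
    ring
  simp only [intervalIntegral.integral_const, intervalIntegral.integral_const_mul, integral_pow,
    smul_eq_mul, h₁]
  ring

theorem setIntegral_refTriangle_quadratic (A B C D E F : ℝ) :
    ∫ p in refTriangle, (A + B * p.1 + C * p.2 + D * p.1 ^ 2 + E * (p.1 * p.2) + F * p.2 ^ 2) =
      A / 2 + (B + C) / 6 + (D + F) / 12 + E / 24 := by
  rw [setIntegral_refTriangle_eq_iterated (by fun_prop)]
  have hinner : ∀ x : ℝ, ∫ y in (0 : ℝ)..(1 - x),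
      (A + B * x + C * y + D * x ^ 2 + E * (x * y) + F * y ^ 2) =
      (A + C / 2 + F / 3) + (B - A - C + E / 2 - F) * x + (D - B + C / 2 - E + F) * x ^ 2
        + (-D + E / 2 - F / 3) * x ^ 3 := by
    intro x
    convert integral_cubic (1 - x) (A + B * x + D * x ^ 2) (C + E * x) F 0 using 1
    · congr 1 with y
      ring
    · ring
  simp only [hinner, integral_cubic]
  ring

end RefTriangle

section Plane

def wedge (v w : ℝ²) : ℝ := v 0 * w 1 - v 1 * w 0

theorem norm_sq_mul_wedge_sq_of_inner_eq_zero {v ℓ : ℝ²} (h : ⟪v, ℓ⟫ = 0) (ℓ' : ℝ²) :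
    ‖v‖ ^ 2 * wedge ℓ ℓ' ^ 2 = ⟪v, ℓ'⟫ ^ 2 * ‖ℓ‖ ^ 2 := by
  simp only [EuclideanSpace.real_norm_sq_eq, PiLp.inner_apply, Fin.sum_univ_two, wedge,
    RCLike.inner_apply, conj_trivial] at h ⊢
  linear_combination h * ((v 0 * ℓ 0 + v 1 * ℓ 1) * (ℓ' 0 ^ 2 + ℓ' 1 ^ 2)
    - 2 * (v 0 * ℓ' 0 + v 1 * ℓ' 1) * (ℓ 0 * ℓ' 0 + ℓ 1 * ℓ' 1))

def stdTriangle : Set ℝ² := {t | 0 ≤ t 0 ∧ 0 ≤ t 1 ∧ t 0 + t 1 ≤ 1}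

theorem convex_stdTriangle : Convex ℝ stdTriangle := by
  rintro x ⟨hx0, hx1, hx⟩ y ⟨hy0, hy1, hy⟩ s r hs hr hsr
  refine ⟨?_, ?_, ?_⟩ <;> simp only [PiLp.add_apply, PiLp.smul_apply, smul_eq_mul] <;> nlinarith

theorem isClosed_stdTriangle : IsClosed stdTriangle :=
  (isClosed_le (f := fun _ : ℝ² => (0 : ℝ)) (by fun_prop) (by fun_prop)).inter
    ((isClosed_le (f := fun _ : ℝ² => (0 : ℝ)) (by fun_prop) (by fun_prop)).inter
      (isClosed_le (g := fun _ : ℝ² => (1 : ℝ)) (by fun_prop) (by fun_prop)))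

theorem setIntegral_stdTriangle_eq_refTriangle {G : Type*} [NormedAddCommGroup G] [NormedSpace ℝ G]
    (g : ℝ × ℝ → G) : ∫ t in stdTriangle, g (t 0, t 1) = ∫ p in refTriangle, g p :=
  ((volume_preserving_finTwoArrow ℝ).comp
    (EuclideanSpace.volume_preserving_symm_measurableEquiv_toLp (Fin 2))).setIntegral_preimage_emb
    ((MeasurableEquiv.toLp 2 (Fin 2 → ℝ)).symm.trans
      MeasurableEquiv.finTwoArrow).measurableEmbedding g refTriangle

theorem setIntegral_stdTriangle_one : ∫ _ in stdTriangle, (1 : ℝ) = 1 / 2 := by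
  have := setIntegral_refTriangle_quadratic 1 0 0 0 0 0
  rw [← setIntegral_stdTriangle_eq_refTriangle] at this
  simpa using this

theorem setIntegral_stdTriangle_norm_sq {F : Type*} [NormedAddCommGroup F]
    [InnerProductSpace ℝ F] (x y z : F) :
    ∫ t in stdTriangle, ‖x + t 0 • y + t 1 • z‖ ^ 2 =
      (‖x + (1 / 2 : ℝ) • y + (1 / 2 : ℝ) • z‖ ^ 2 + ‖x + (1 / 2 : ℝ) • z‖ ^ 2
        + ‖x + (1 / 2 : ℝ) • y‖ ^ 2) / 6 := by
  have h₁ := norm_add_smul_add_smul_sq x y z 0 (1 / 2)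
  have h₂ := norm_add_smul_add_smul_sq x y z (1 / 2) 0
  simp only [zero_smul, add_zero] at h₁ h₂
  simp only [norm_add_smul_add_smul_sq]
  rw [h₁, h₂, setIntegral_stdTriangle_eq_refTriangle (fun p => ‖x‖ ^ 2 + 2 * ⟪x, y⟫ * p.1
      + 2 * ⟪x, z⟫ * p.2 + ‖y‖ ^ 2 * p.1 ^ 2 + 2 * ⟪y, z⟫ * (p.1 * p.2) + ‖z‖ ^ 2 * p.2 ^ 2),
    setIntegral_refTriangle_quadratic]
  ring

noncomputable def edgeMap (v w : ℝ²) : ℝ² →L[ℝ] ℝ² :=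
  (EuclideanSpace.proj 0).smulRight v + (EuclideanSpace.proj 1).smulRight w

@[simp]
theorem edgeMap_apply (v w t : ℝ²) : edgeMap v w t = t 0 • v + t 1 • w := by
  simp [edgeMap]

theorem det_edgeMap (v w : ℝ²) : (edgeMap v w).det = wedge v w := by
  rw [ContinuousLinearMap.det,
    ← LinearMap.det_toMatrix (EuclideanSpace.basisFun (Fin 2) ℝ).toBasis, Matrix.det_fin_two]
  simp [LinearMap.toMatrix_apply, wedge, mul_comm]

variable {a : Fin 3 → ℝ²}

theorem AffineIndependent.injective_edgeMap (ha : AffineIndependent ℝ a) :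
    Function.Injective (edgeMap (a 1 - a 0) (a 2 - a 0)) := by
  refine (injective_iff_map_eq_zero _).2 fun t ht => ?_
  have hw := ha.eq_zero_of_sum_eq_zero (s := Finset.univ) (w := ![-(t 0 + t 1), t 0, t 1])
    (by simp [Fin.sum_univ_three]) (by
      rw [edgeMap_apply] at ht
      simp only [Fin.sum_univ_three, Matrix.cons_val]
      rw [← ht]
      module)
  ext i
  fin_cases i
  · simpa using hw 1 (Finset.mem_univ _)
  · simpa using hw 2 (Finset.mem_univ _)

theorem AffineIndependent.wedge_ne_zero (ha : AffineIndependent ℝ a) :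
    wedge (a 1 - a 0) (a 2 - a 0) ≠ 0 := by
  rw [← det_edgeMap, ContinuousLinearMap.det, ← isUnit_iff_ne_zero,
    ← LinearMap.isUnit_iff_isUnit_det, LinearMap.isUnit_iff_ker_eq_bot, LinearMap.ker_eq_bot]
  exact ha.injective_edgeMap

theorem image_stdTriangle (a : Fin 3 → ℝ²) :
    (fun t => a 0 + edgeMap (a 1 - a 0) (a 2 - a 0) t) '' stdTriangle =
      convexHull ℝ (range a) := by
  apply Subset.antisymm
  · rintro _ ⟨t, ⟨h0, h1, h01⟩, rfl⟩
    rw [convexHull_range_eq_exists_affineCombination]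
    have hw : ∑ i, ![1 - t 0 - t 1, t 0, t 1] i = 1 := by
      simp only [Fin.sum_univ_three, Matrix.cons_val_zero, Matrix.cons_val_one, Matrix.cons_val]
      ring
    refine ⟨Finset.univ, ![1 - t 0 - t 1, t 0, t 1], fun i _ => ?_, hw, ?_⟩
    · fin_cases i <;> simp only [Fin.zero_eta, Fin.mk_one, Fin.reduceFinMk, Matrix.cons_val_zero,
        Matrix.cons_val_one, Matrix.cons_val, sub_nonneg] <;> linarith
    · rw [Finset.affineCombination_eq_linear_combination _ _ _ hw]
      simp only [Fin.sum_univ_three, Matrix.cons_val_zero, Matrix.cons_val_one, Matrix.cons_val,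
        edgeMap_apply]
      module
  · refine convexHull_min ?_ (convex_stdTriangle.affine_image
      (AffineMap.const ℝ ℝ² (a 0) + (edgeMap (a 1 - a 0) (a 2 - a 0) : ℝ² →ₗ[ℝ] ℝ²).toAffineMap))
    rintro _ ⟨i, rfl⟩
    fin_cases i
    · exact ⟨0, by simp [stdTriangle], by simp⟩
    · exact ⟨EuclideanSpace.single 0 1, by simp [stdTriangle], by simp⟩
    · exact ⟨EuclideanSpace.single 1 1, by simp [stdTriangle], by simp⟩

theorem setIntegral_convexHull {G : Type*} [NormedAddCommGroup G] [NormedSpace ℝ G]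
    (ha : AffineIndependent ℝ a) (f : ℝ² → G) :
    ∫ x in convexHull ℝ (range a), f x = |wedge (a 1 - a 0) (a 2 - a 0)| •
      ∫ t in stdTriangle, f (a 0 + t 0 • (a 1 - a 0) + t 1 • (a 2 - a 0)) := by
  rw [← image_stdTriangle, setIntegral_image_add_linear volume ha.injective_edgeMap _
    isClosed_stdTriangle.measurableSet, det_edgeMap]
  simp only [edgeMap_apply, add_assoc]

theorem volume_convexHull_toReal (ha : AffineIndependent ℝ a) :
    (volume (convexHull ℝ (range a))).toReal = |wedge (a 1 - a 0) (a 2 - a 0)| / 2 := by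
  have h := setIntegral_convexHull ha (fun _ => (1 : ℝ))
  rw [setIntegral_stdTriangle_one, setIntegral_const, smul_eq_mul, mul_one] at h
  rw [← measureReal_def, h, smul_eq_mul]
  ring

theorem setIntegral_convexHull_norm_sq {F : Type*} [NormedAddCommGroup F]
    [InnerProductSpace ℝ F] (ha : AffineIndependent ℝ a) (L : ℝ² →ₗ[ℝ] F) (d : F) :
    ∫ x in convexHull ℝ (range a), ‖L x + d‖ ^ 2 = |wedge (a 1 - a 0) (a 2 - a 0)| / 6 *
      ∑ i : Fin 3, ‖L (midpoint ℝ (a (i + 1)) (a (i + 2))) + d‖ ^ 2 := by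
  set v := L (a 1 - a 0)
  set w := L (a 2 - a 0)
  have hL : ∀ s t : ℝ, L (a 0 + s • (a 1 - a 0) + t • (a 2 - a 0)) + d =
      (L (a 0) + d) + s • v + t • w := by
    intro s t
    simp only [map_add, map_smul, v, w]
    abel
  have hmid : ∀ s t : ℝ, L (midpoint ℝ (a 0 + s • (a 1 - a 0)) (a 0 + t • (a 2 - a 0))) + d =
      (L (a 0) + d) + (s / 2) • v + (t / 2) • w := by
    intro s t
    rw [midpoint_eq_smul_add, invOf_eq_inv]
    simp only [map_add, map_smul, v, w]
    module
  have h0 := hmid 1 1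
  have h1 := hmid 0 1
  have h2 := hmid 1 0
  simp only [one_smul, zero_smul, zero_div, add_zero, add_sub_cancel] at h0 h1 h2
  rw [midpoint_comm] at h1 h2
  rw [setIntegral_convexHull ha, smul_eq_mul]
  simp only [hL]
  rw [setIntegral_stdTriangle_norm_sq]
  simp only [Fin.sum_univ_three, zero_add, Fin.reduceAdd, h0, h1, h2]
  ring

theorem wedge_sub_cyclic (a : Fin 3 → ℝ²) (i : Fin 3) :
    wedge (a (i + 2) - a (i + 1)) (a i - a (i + 2)) = wedge (a 1 - a 0) (a 2 - a 0) := by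
  fin_cases i <;> simp only [wedge, Fin.zero_eta, Fin.mk_one, Fin.reduceFinMk, zero_add,
    Fin.reduceAdd, PiLp.sub_apply] <;> ring

theorem norm_sq_gradient_quadratic_midpoint_mul_wedge_sq {A : ℝ² →L[ℝ] ℝ²}
    (hA : (A : ℝ² →ₗ[ℝ] ℝ²).IsSymmetric) (d : ℝ²) (k : ℝ) {p q r : ℝ²}
    (hpr : quadratic A d k p = quadratic A d k r) (hqr : quadratic A d k q = quadratic A d k r) :
    ‖A (midpoint ℝ q r) + d‖ ^ 2 * wedge (r - q) (p - r) ^ 2 =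
      (⟪p - r, A (q - p)⟫ / 2) ^ 2 * ‖r - q‖ ^ 2 := by
  have horth : ⟪A (midpoint ℝ q r) + d, r - q⟫ = 0 := by
    rw [inner_gradient_quadratic_eq_of_eq hA d k hqr, sub_self, inner_zero_left]
  have hcomp : ⟪A (midpoint ℝ q r) + d, p - r⟫ = ⟪p - r, A (q - p)⟫ / 2 := by
    have hmid : midpoint ℝ q r - midpoint ℝ r p = (1 / 2 : ℝ) • (q - p) := by
      simp only [midpoint_eq_smul_add, invOf_eq_inv]
      module
    have hsymm : ⟪A (q - p), p - r⟫ = ⟪q - p, A (p - r)⟫ := hA (q - p) (p - r)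
    rw [inner_gradient_quadratic_eq_of_eq hA d k hpr.symm, hmid, real_inner_smul_left, ← hsymm,
      real_inner_comm]
    ring
  rw [← hcomp]
  exact norm_sq_mul_wedge_sq_of_inner_eq_zero horth _

end Plane

theorem matBilin_eq_inner (H : Matrix (Fin 2) (Fin 2) ℝ) (v w : ℝ²) :
    matBilin H v w = ⟪v, Matrix.toEuclideanCLM (𝕜 := ℝ) H w⟫ := by
  simp only [matBilin, Fin.sum_univ_two, Matrix.inner_toEuclideanCLM, dotProduct, Matrix.mulVec]
  ring

/-- For a quadratic `u` with constant Hessian `H` and its linear interpolant `u_I`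
on a nondegenerate triangle `K` with vertices `a₁, a₂, a₃`, edge vectors
`ℓᵢ = a_{i+2} − a_{i+1}` and `cᵢ = ℓ_{i+1} · (H ℓ_{i+2})`, one has
`∫_K |∇(u − u_I)|² = (1/(48|K|)) Σᵢ cᵢ² |ℓᵢ|²`. -/
theorem integral_gradient_sq_interp_error
    (a : Fin 3 → EuclideanSpace ℝ (Fin 2))
    (hind : AffineIndependent ℝ a)
    (K : Set (EuclideanSpace ℝ (Fin 2)))
    (hK : K = convexHull ℝ (Set.range a))
    (H : Matrix (Fin 2) (Fin 2) ℝ) (hH : H.IsSymm)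
    (b : EuclideanSpace ℝ (Fin 2)) (c : ℝ)
    (u : EuclideanSpace ℝ (Fin 2) → ℝ)
    (hu : ∀ x, u x = (1 / 2) * matBilin H x x + ⟪b, x⟫ + c)
    (uI : EuclideanSpace ℝ (Fin 2) →ᵃ[ℝ] ℝ)
    (hI : ∀ i, uI (a i) = u (a i))
    (ℓ : Fin 3 → EuclideanSpace ℝ (Fin 2))
    (hℓ : ∀ i, ℓ i = a (i + 2) - a (i + 1))
    (cc : Fin 3 → ℝ)
    (hcc : ∀ i, cc i = matBilin H (ℓ (i + 1)) (ℓ (i + 2))) :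
    ∫ x in K, ‖gradient (fun y => u y - uI y) x‖ ^ 2 =
      (1 / (48 * (volume K).toReal)) * ∑ i : Fin 3, (cc i) ^ 2 * ‖ℓ i‖ ^ 2 := by
  obtain ⟨w, hw⟩ := uI.exists_eq_inner_add
  set A := Matrix.toEuclideanCLM (𝕜 := ℝ) H
  have hA : (A : ℝ² →ₗ[ℝ] ℝ²).IsSymmetric :=
    Matrix.isSymmetric_toEuclideanLin_iff.mpr (Matrix.isHermitian_iff_isSymm.mpr hH)
  set e := quadratic A (b - w) (c - uI 0)
  have he : (fun y => u y - uI y) = e := by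
    funext y
    rw [hu, hw, matBilin_eq_inner]
    simp only [e, quadratic, inner_sub_left]
    ring
  have hzero : ∀ i, e (a i) = 0 := fun i => by
    rw [← he]
    exact sub_eq_zero.mpr (hI i).symm
  have hgrad : ∀ x, gradient e x = A x + (b - w) :=
    fun x => (hasGradientAt_quadratic hA _ _ x).gradient
  have hquad := setIntegral_convexHull_norm_sq hind (A : ℝ² →ₗ[ℝ] ℝ²) (b - w)
  simp only [ContinuousLinearMap.coe_coe] at hquad
  rw [he, hK]
  simp only [hgrad]
  rw [hquad, volume_convexHull_toReal hind, Finset.mul_sum, Finset.mul_sum]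
  refine Finset.sum_congr rfl fun i _ => ?_
  have hmid := norm_sq_gradient_quadratic_midpoint_mul_wedge_sq hA (b - w) (c - uI 0)
    ((hzero i).trans (hzero (i + 2)).symm) ((hzero (i + 1)).trans (hzero (i + 2)).symm)
  rw [wedge_sub_cyclic, ← sq_abs (wedge _ _)] at hmid
  rw [hcc, hℓ, hℓ, hℓ, matBilin_eq_inner]
  simp only [add_assoc, Fin.reduceAdd, add_zero]
  have hD : |wedge (a 1 - a 0) (a 2 - a 0)| ≠ 0 := abs_ne_zero.mpr hind.wedge_ne_zero
  field_simp
  linear_combination 48 * hmid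
end

section
/- Let K ⊂ ℝ² be a nondegenerate triangle with vertices a₁, a₂, a₃, and let λ₁, λ₂, λ₃ : ℝ² → ℝ be the barycentric coordinate functions of K (the affine functions with λ_i(a_j) = δ_{ij}). Let u : ℝ² → ℝ be a quadratic polynomial with constant Hessian H and u_I its linear interpolant at the vertices. Then for every x ∈ ℝ², u(x) − u_I(x) = −(1/2) Σ_{i=1}^{3} λ_i(x) · [(x − a_i) · (H(x − a_i))]. -/
open RealInnerProductSpace

/-!
Write `x = ∑ λᵢ(x) aᵢ` with `∑ λᵢ(x) = 1`. The interpolant reproduces the affine part of `u`,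
so `u(x) − u_I(x) = ½ (q(x) − ∑ λᵢ(x) q(aᵢ))` for the quadratic form `q(v) = v · H v`.
Expanding `q(x − aᵢ)` and using `∑ λᵢ(x) (x − aᵢ) = 0` gives
`∑ λᵢ(x) q(x − aᵢ) = ∑ λᵢ(x) q(aᵢ) − q(x)`, which is the claim.
-/

section WeightedMean

variable {ι k E : Type*} [Fintype ι] [Field k] [AddCommGroup E] [Module k E]
  {w : ι → k} {p : ι → E} {x : E}

theorem LinearMap.sum_mul_apply_eq_of_sum_smul_eq (ℓ : E →ₗ[k] k) (hx : ∑ i, w i • p i = x) :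
    ∑ i, w i * ℓ (p i) = ℓ x := by
  simp [← hx, map_sum]

theorem LinearMap.sum_mul_apply_sub_apply_sub (B : E →ₗ[k] E →ₗ[k] k) (hw : ∑ i, w i = 1)
    (hx : ∑ i, w i • p i = x) :
    ∑ i, w i * B (x - p i) (x - p i) = ∑ i, w i * B (p i) (p i) - B x x := by
  have hcentred : ∑ i, w i • (x - p i) = 0 := by
    simp [smul_sub, Finset.sum_sub_distrib, ← Finset.sum_smul, hw, hx]
  have hleft : ∑ i, w i * B (x - p i) x = 0 := by
    simpa [map_sum, LinearMap.sum_apply] using congrArg (B · x) hcentred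
  have hright : ∑ i, w i * B x (p i) = B x x := (B x).sum_mul_apply_eq_of_sum_smul_eq hx
  calc ∑ i, w i * B (x - p i) (x - p i)
      = ∑ i, w i * B (x - p i) x - ∑ i, w i * B x (p i) + ∑ i, w i * B (p i) (p i) := by
        simp only [← Finset.sum_sub_distrib, ← Finset.sum_add_distrib, map_sub,
          LinearMap.sub_apply]
        exact Finset.sum_congr rfl fun i _ => by ring
    _ = ∑ i, w i * B (p i) (p i) - B x x := by rw [hleft, hright]; ring

theorem sub_sum_mul_quadratic_eq (B : E →ₗ[k] E →ₗ[k] k) (ℓ : E →ₗ[k] k) (c : k)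
    (hw : ∑ i, w i = 1) (hx : ∑ i, w i • p i = x) :
    (1 / 2 * B x x + ℓ x + c) - ∑ i, w i * (1 / 2 * B (p i) (p i) + ℓ (p i) + c) =
      -(1 / 2) * ∑ i, w i * B (x - p i) (x - p i) := by
  have hsplit : ∑ i, w i * (1 / 2 * B (p i) (p i) + ℓ (p i) + c) =
      1 / 2 * ∑ i, w i * B (p i) (p i) + ∑ i, w i * ℓ (p i) + ∑ i, w i * c := by
    rw [Finset.mul_sum, ← Finset.sum_add_distrib, ← Finset.sum_add_distrib]
    exact Finset.sum_congr rfl fun i _ => by ring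
  have hc : ∑ i, w i * c = c := by rw [← Finset.sum_mul, hw, one_mul]
  rw [hsplit, B.sum_mul_apply_sub_apply_sub hw hx, ℓ.sum_mul_apply_eq_of_sum_smul_eq hx, hc]
  ring

end WeightedMean

namespace AffineBasis

variable {ι k V P : Type*} [Ring k] [AddCommGroup V] [Module k V] [AddTorsor V P]
  (T : AffineBasis ι k P)

theorem apply_eq_sum_coord_smul [Fintype ι] {W : Type*} [AddCommGroup W] [Module k W]
    (f : P →ᵃ[k] W) (q : P) :
    f q = ∑ i, T.coord i q • f (T i) := by
  conv_lhs => rw [← T.affineCombination_coord_eq_self q]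
  rw [Finset.map_affineCombination _ _ _ (T.sum_coord_apply_eq_one q),
    Finset.affineCombination_eq_linear_combination _ _ _ (T.sum_coord_apply_eq_one q)]
  rfl

theorem eq_coord_of_apply_eq_ite [DecidableEq ι] {f : P →ᵃ[k] k} {i : ι}
    (hf : ∀ j, f (T j) = if i = j then 1 else 0) : f = T.coord i :=
  AffineMap.ext_on T.tot <| by rintro _ ⟨j, rfl⟩; simp [hf, T.coord_apply]

end AffineBasis

noncomputable def matBilinₗ (H : Matrix (Fin 2) (Fin 2) ℝ) :
    EuclideanSpace ℝ (Fin 2) →ₗ[ℝ] EuclideanSpace ℝ (Fin 2) →ₗ[ℝ] ℝ :=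
  (Matrix.toLinearMap₂' ℝ H).compl₁₂ (WithLp.linearEquiv 2 ℝ _).toLinearMap
    (WithLp.linearEquiv 2 ℝ _).toLinearMap

theorem matBilinₗ_apply (H : Matrix (Fin 2) (Fin 2) ℝ) (v w : EuclideanSpace ℝ (Fin 2)) :
    matBilinₗ H v w = matBilin H v w := by
  simp only [matBilinₗ, matBilin, LinearMap.compl₁₂_apply, Matrix.toLinearMap₂'_apply,
    smul_eq_mul]
  refine Finset.sum_congr rfl fun i _ => Finset.sum_congr rfl fun j _ => ?_
  change v i * (w j * H i j) = _
  ring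

theorem interp_error_expansion_general
    (a : Fin 3 → EuclideanSpace ℝ (Fin 2))
    (hind : AffineIndependent ℝ a)
    (lam : Fin 3 → (EuclideanSpace ℝ (Fin 2) →ᵃ[ℝ] ℝ))
    (hlam : ∀ i j, lam i (a j) = if i = j then 1 else 0)
    (H : Matrix (Fin 2) (Fin 2) ℝ)
    (b : EuclideanSpace ℝ (Fin 2)) (c : ℝ)
    (u : EuclideanSpace ℝ (Fin 2) → ℝ)
    (hu : ∀ x, u x = (1 / 2) * matBilin H x x + ⟪b, x⟫ + c)
    (uI : EuclideanSpace ℝ (Fin 2) →ᵃ[ℝ] ℝ)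
    (hI : ∀ i, uI (a i) = u (a i)) :
    ∀ x, u x - uI x =
      -(1 / 2) * ∑ i : Fin 3, lam i x * matBilin H (x - a i) (x - a i) := by
  intro x
  have hspan : affineSpan ℝ (Set.range a) = ⊤ := by
    simp [hind.affineSpan_eq_top_iff_card_eq_finrank_add_one]
  let T : AffineBasis (Fin 3) ℝ (EuclideanSpace ℝ (Fin 2)) := ⟨a, hind, hspan⟩
  have hT : ⇑T = a := rfl
  have hlamT (i : Fin 3) : lam i = T.coord i := T.eq_coord_of_apply_eq_ite (hlam i)
  rw [T.apply_eq_sum_coord_smul uI x]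
  simp only [hlamT, hT, hI, hu, smul_eq_mul, ← matBilinₗ_apply, ← innerₛₗ_apply_apply]
  exact sub_sum_mul_quadratic_eq (matBilinₗ H) (innerₛₗ ℝ b) c (T.sum_coord_apply_eq_one x)
    (T.linear_combination_coord_eq_self x)

/-- Error expansion: for a quadratic `u` with constant Hessian `H`, its linear
interpolant `u_I` at the vertices of a nondegenerate triangle with barycentric
coordinates `λᵢ`, one has
`u(x) − u_I(x) = −(1/2) Σᵢ λᵢ(x) [(x − aᵢ) · H (x − aᵢ)]` for all `x`. -/
theorem interp_error_expansion
    (a : Fin 3 → EuclideanSpace ℝ (Fin 2))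
    (hind : AffineIndependent ℝ a)
    (lam : Fin 3 → (EuclideanSpace ℝ (Fin 2) →ᵃ[ℝ] ℝ))
    (hlam : ∀ i j, lam i (a j) = if i = j then 1 else 0)
    (H : Matrix (Fin 2) (Fin 2) ℝ) (hH : H.IsSymm)
    (b : EuclideanSpace ℝ (Fin 2)) (c : ℝ)
    (u : EuclideanSpace ℝ (Fin 2) → ℝ)
    (hu : ∀ x, u x = (1 / 2) * matBilin H x x + ⟪b, x⟫ + c)
    (uI : EuclideanSpace ℝ (Fin 2) →ᵃ[ℝ] ℝ)
    (hI : ∀ i, uI (a i) = u (a i)) :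
    ∀ x, u x - uI x =
      -(1 / 2) * ∑ i : Fin 3, lam i x * matBilin H (x - a i) (x - a i) :=
  interp_error_expansion_general a hind lam hlam H b c u hu uI hI
end

section
/- Let K ⊂ ℝ² be a nondegenerate triangle with vertices a₁, a₂, a₃, and let λ₁, λ₂, λ₃ be its barycentric coordinate functions. Let u : ℝ² → ℝ be a quadratic polynomial with constant Hessian H and u_I its linear interpolant at the vertices. Then for every x ∈ ℝ², ∇(u − u_I)(x) = −(1/2) Σ_{i=1}^{3} ∇λ_i · [(x − a_i) · (H(x − a_i))], where ∇λ_i denotes the (constant) gradient vector of the affine function λ_i. -/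
open RealInnerProductSpace

/-!
Since `∑ λᵢ = 1` and `∑ λᵢ(y) • aᵢ = y`, the interpolation error of `u = Q + p`, with
`Q y = B y y` quadratic and `p` affine, has the pointwise representation
`u y - u_I y = -∑ λᵢ(y) Q(y - aᵢ)`. Differentiating it at `x` by the product rule, the terms
`λᵢ(x) • DQ(x - aᵢ)` add up to `DQ(∑ λᵢ(x) • (x - aᵢ)) = DQ(0) = 0`, which leaves
`-∑ Q(x - aᵢ) ∇λᵢ`; here `B = ½ matBilin H`.
-/

namespace AffineBasis

section Module

variable {ι k V P W : Type*} [Fintype ι] [Ring k] [AddCommGroup V] [Module k V]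
  [AddTorsor V P] [AddCommGroup W] [Module k W]

theorem sum_coord_smul_apply (b : AffineBasis ι k P) (f : P →ᵃ[k] W) (q : P) :
    ∑ i, b.coord i q • f (b i) = f q := by
  conv_rhs => rw [← b.affineCombination_coord_eq_self q]
  rw [Finset.map_affineCombination _ _ _ (b.sum_coord_apply_eq_one q),
    Finset.univ.affineCombination_eq_linear_combination _ _ (b.sum_coord_apply_eq_one q)]
  rfl

theorem sum_coord_smul_sub_eq_zero (b : AffineBasis ι k V) (v : V) :
    ∑ i, b.coord i v • (v - b i) = 0 := by
  simp [smul_sub, Finset.sum_sub_distrib, ← Finset.sum_smul]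

end Module

section Bilinear

variable {ι k V : Type*} [Fintype ι] [CommRing k] [AddCommGroup V] [Module k V]

theorem sum_coord_mul_apply_sub_sub (b : AffineBasis ι k V) (B : V →ₗ[k] V →ₗ[k] k) (y : V) :
    ∑ i, b.coord i y * B (y - b i) (y - b i) = ∑ i, b.coord i y * B (b i) (b i) - B y y := by
  have hpolar : ∀ a, B (y - a) (y - a) = B a a - B y y + (B (y - a) y + B y (y - a)) := by
    intro a
    simp only [map_sub, LinearMap.sub_apply]
    ring
  have hcross : ∑ i, b.coord i y * (B (y - b i) y + B y (y - b i)) = 0 := by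
    have h := congrArg (fun v => B v y + B y v) (b.sum_coord_smul_sub_eq_zero y)
    simpa [map_sum, Finset.sum_add_distrib, mul_add] using h
  calc ∑ i, b.coord i y * B (y - b i) (y - b i)
      = ∑ i, (b.coord i y * (B (b i) (b i) - B y y)
          + b.coord i y * (B (y - b i) y + B y (y - b i))) := by
        simp only [hpolar, mul_add]
    _ = ∑ i, b.coord i y * B (b i) (b i) - B y y := by
        rw [Finset.sum_add_distrib, hcross, add_zero]
        simp [mul_sub, Finset.sum_sub_distrib, ← Finset.sum_mul]

theorem sub_interpolant_eq_neg_sum_coord_mul (b : AffineBasis ι k V) (B : V →ₗ[k] V →ₗ[k] k)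
    (p : V →ᵃ[k] k) (u : V → k) (hu : ∀ y, u y = B y y + p y) (uI : V →ᵃ[k] k)
    (hI : ∀ i, uI (b i) = u (b i)) (y : V) :
    u y - uI y = -∑ i, b.coord i y * B (y - b i) (y - b i) := by
  rw [sum_coord_mul_apply_sub_sub, hu, ← b.sum_coord_smul_apply uI, ← b.sum_coord_smul_apply p]
  simp only [hI, hu, smul_eq_mul, mul_add, Finset.sum_add_distrib]
  ring

end Bilinear

end AffineBasis

section Derivative

variable {E : Type*} [NormedAddCommGroup E] [NormedSpace ℝ E] [FiniteDimensional ℝ E]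

theorem AffineMap.hasFDerivAt_of_finiteDimensional {F : Type*} [NormedAddCommGroup F]
    [NormedSpace ℝ F] (f : E →ᵃ[ℝ] F) (x : E) :
    HasFDerivAt f (LinearMap.toContinuousLinearMap f.linear) x :=
  (⟨f, f.continuous_of_finiteDimensional⟩ : E →ᴬ[ℝ] F).hasFDerivAt

theorem LinearMap.hasFDerivAt_apply_sub_sub (B : E →ₗ[ℝ] E →ₗ[ℝ] ℝ) (a x : E) :
    HasFDerivAt (fun y => B (y - a) (y - a))
      (B.toContinuousBilinearMap (x - a) + B.flip.toContinuousBilinearMap (x - a)) x := by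
  have h := (hasFDerivAt_id (𝕜 := ℝ) x).sub_const a
  refine (B.toContinuousBilinearMap.hasFDerivAt_of_bilinear h h).congr_fderiv ?_
  ext v
  simp

theorem AffineBasis.hasFDerivAt_sum_coord_mul_apply_sub_sub {ι : Type*} [Fintype ι]
    (b : AffineBasis ι ℝ E) (B : E →ₗ[ℝ] E →ₗ[ℝ] ℝ) (x : E) :
    HasFDerivAt (fun y => ∑ i, b.coord i y * B (y - b i) (y - b i))
      (∑ i, B (x - b i) (x - b i) • LinearMap.toContinuousLinearMap (b.coord i).linear) x := by
  refine (HasFDerivAt.fun_sum (u := Finset.univ) fun i _ =>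
    ((b.coord i).hasFDerivAt_of_finiteDimensional x).mul
      (B.hasFDerivAt_apply_sub_sub (b i) x)).congr_fderiv ?_
  have hcross : ∀ v, ∑ i, b.coord i x * (B (x - b i) v + B v (x - b i)) = 0 := by
    intro v
    have h := congrArg (fun w => B w v + B v w) (b.sum_coord_smul_sub_eq_zero x)
    simpa [map_sum, Finset.sum_add_distrib, mul_add] using h
  ext v
  simp only [sum_apply, add_apply, smul_apply, smul_eq_mul,
    LinearMap.toContinuousBilinearMap_apply, LinearMap.flip_apply, Finset.sum_add_distrib,
    hcross, zero_add]

end Derivative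

@[simp]
theorem IsBilinearMap.toLinearMap_apply {R E F G : Type*} [CommSemiring R] [AddCommMonoid E]
    [Module R E] [AddCommMonoid F] [Module R F] [AddCommMonoid G] [Module R G] {f : E → F → G}
    (hf : IsBilinearMap R f) (x : E) (y : F) : hf.toLinearMap x y = f x y :=
  rfl

theorem matBilin_isBilinearMap (H : Matrix (Fin 2) (Fin 2) ℝ) :
    IsBilinearMap ℝ (matBilin H) where
  add_left _ _ _ := by simp [matBilin, add_mul, Finset.sum_add_distrib]
  smul_left _ _ _ := by simp [matBilin, Fin.sum_univ_two]; ring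
  add_right _ _ _ := by simp [matBilin, mul_add, Finset.sum_add_distrib]
  smul_right _ _ _ := by simp [matBilin, Fin.sum_univ_two]; ring

theorem gradient_interp_error_expansion_general
    (a : Fin 3 → EuclideanSpace ℝ (Fin 2))
    (hind : AffineIndependent ℝ a)
    (lam : Fin 3 → (EuclideanSpace ℝ (Fin 2) →ᵃ[ℝ] ℝ))
    (hlam : ∀ i j, lam i (a j) = if i = j then 1 else 0)
    (g : Fin 3 → EuclideanSpace ℝ (Fin 2))
    (hg : ∀ i x, gradient (fun y => lam i y) x = g i)
    (H : Matrix (Fin 2) (Fin 2) ℝ)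
    (b : EuclideanSpace ℝ (Fin 2)) (c : ℝ)
    (u : EuclideanSpace ℝ (Fin 2) → ℝ)
    (hu : ∀ x, u x = (1 / 2) * matBilin H x x + ⟪b, x⟫ + c)
    (uI : EuclideanSpace ℝ (Fin 2) →ᵃ[ℝ] ℝ)
    (hI : ∀ i, uI (a i) = u (a i)) :
    ∀ x, gradient (fun y => u y - uI y) x =
      (-(1 / 2) : ℝ) • ∑ i : Fin 3, matBilin H (x - a i) (x - a i) • g i := by
  intro x
  have hspan : affineSpan ℝ (Set.range a) = ⊤ := by
    rw [hind.affineSpan_eq_top_iff_card_eq_finrank_add_one]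
    simp
  let β : AffineBasis (Fin 3) ℝ (EuclideanSpace ℝ (Fin 2)) := ⟨a, hind, hspan⟩
  have hcoord : ∀ i, lam i = β.coord i := fun i =>
    AffineMap.ext_on hspan (by rintro - ⟨j, rfl⟩; exact (hlam i j).trans (β.coord_apply i j).symm)
  have hdual : ∀ i, InnerProductSpace.toDual ℝ _ (g i) =
      LinearMap.toContinuousLinearMap (β.coord i).linear := fun i => by
    rw [← hg i x, hcoord i, gradient, ((β.coord i).hasFDerivAt_of_finiteDimensional x).fderiv,
      LinearIsometryEquiv.apply_symm_apply]
  let B := (1 / 2 : ℝ) • (matBilin_isBilinearMap H).toLinearMap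
  let p := (innerₛₗ ℝ b).toAffineMap + AffineMap.const ℝ (EuclideanSpace ℝ (Fin 2)) c
  have herr := β.sub_interpolant_eq_neg_sum_coord_mul B p u
    (fun y => by simp [hu, B, p, add_assoc]) uI hI
  rw [funext herr]
  refine HasGradientAt.gradient ?_
  rw [hasGradientAt_iff_hasFDerivAt]
  refine (β.hasFDerivAt_sum_coord_mul_apply_sub_sub B x).neg.congr_fderiv ?_
  simp only [← hdual, ← map_smul, ← map_sum, ← map_neg]
  congr 1
  simp only [B, LinearMap.smul_apply, IsBilinearMap.toLinearMap_apply, smul_eq_mul,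
    Finset.smul_sum, smul_smul, neg_smul, neg_mul, Finset.sum_neg_distrib]
  rfl

/-- Gradient error expansion: for a quadratic `u` with constant Hessian `H`, its linear
interpolant `u_I` at the vertices of a nondegenerate triangle with barycentric
coordinates `λᵢ` having constant gradients `∇λᵢ = g i`, one has
`∇(u − u_I)(x) = −(1/2) Σᵢ [(x − aᵢ) · H (x − aᵢ)] ∇λᵢ` for all `x`. -/
theorem gradient_interp_error_expansion
    (a : Fin 3 → EuclideanSpace ℝ (Fin 2))
    (hind : AffineIndependent ℝ a)
    (lam : Fin 3 → (EuclideanSpace ℝ (Fin 2) →ᵃ[ℝ] ℝ))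
    (hlam : ∀ i j, lam i (a j) = if i = j then 1 else 0)
    (g : Fin 3 → EuclideanSpace ℝ (Fin 2))
    (hg : ∀ i x, gradient (fun y => lam i y) x = g i)
    (H : Matrix (Fin 2) (Fin 2) ℝ) (hH : H.IsSymm)
    (b : EuclideanSpace ℝ (Fin 2)) (c : ℝ)
    (u : EuclideanSpace ℝ (Fin 2) → ℝ)
    (hu : ∀ x, u x = (1 / 2) * matBilin H x x + ⟪b, x⟫ + c)
    (uI : EuclideanSpace ℝ (Fin 2) →ᵃ[ℝ] ℝ)
    (hI : ∀ i, uI (a i) = u (a i)) :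
    ∀ x, gradient (fun y => u y - uI y) x =
      (-(1 / 2) : ℝ) • ∑ i : Fin 3, matBilin H (x - a i) (x - a i) • g i :=
  gradient_interp_error_expansion_general a hind lam hlam g hg H b c u hu uI hI
end

section
/- Let K ⊂ ℝ² be a nondegenerate triangle with vertices a₁, a₂, a₃ and barycentric coordinate functions λ₁, λ₂, λ₃, and let H be a symmetric real 2×2 matrix. Then the vector field F : ℝ² → ℝ² defined by F(x) = Σ_{i=1}^{3} ∇λ_i · [(x − a_i) · (H(x − a_i))] is affine (each component of F is a polynomial of degree at most 1 in x); consequently x ↦ |F(x)|² is a polynomial of total degree at most 2. -/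
open InnerProductSpace MvPolynomial

section AffineMap

variable {k V P ι : Type*} [Ring k] [AddCommGroup V] [Module k V] [AddTorsor V P]

theorem AffineMap.sum_apply (s : Finset ι) (f : ι → P →ᵃ[k] k) (p : P) :
    (∑ i ∈ s, f i) p = ∑ i ∈ s, f i p :=
  map_sum (AddMonoidHom.mk' (fun f : P →ᵃ[k] k => f p) fun _ _ => rfl) f s

theorem AffineMap.sum_linear (s : Finset ι) (f : ι → P →ᵃ[k] k) :
    (∑ i ∈ s, f i).linear = ∑ i ∈ s, (f i).linear :=
  map_sum (AddMonoidHom.mk' (fun f : P →ᵃ[k] k => f.linear) fun f g => f.add_linear g) f s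

theorem AffineMap.sum_eq_const_one_of_apply_eq_ite [Fintype ι] [DecidableEq ι] {a : ι → P}
    (hspan : affineSpan k (Set.range a) = ⊤) (lam : ι → P →ᵃ[k] k)
    (hlam : ∀ i j, lam i (a j) = if i = j then 1 else 0) :
    ∑ i, lam i = AffineMap.const k P 1 := by
  refine AffineMap.ext_on hspan ?_
  rintro _ ⟨j, rfl⟩
  simp [AffineMap.sum_apply, hlam]

end AffineMap

section Gradient

variable {E : Type*} [NormedAddCommGroup E] [InnerProductSpace ℝ E] [FiniteDimensional ℝ E]

theorem AffineMap.gradient_eq (f : E →ᵃ[ℝ] ℝ) (x : E) :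
    gradient f x = (toDual ℝ E).symm (LinearMap.toContinuousLinearMap f.linear) :=
  let f' : E →ᴬ[ℝ] ℝ := ⟨f, f.continuous_of_finiteDimensional⟩
  f'.hasFDerivAt.hasGradientAt.gradient

theorem sum_gradient_eq_zero_of_sum_eq_one {ι : Type*} [Fintype ι] (lam : ι → E →ᵃ[ℝ] ℝ)
    (hsum : ∑ i, lam i = AffineMap.const ℝ E 1) (x : E) :
    ∑ i, gradient (lam i) x = 0 := by
  have hlinear : ∑ i, (lam i).linear = 0 := by
    simpa [AffineMap.sum_linear] using congrArg AffineMap.linear hsum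
  simp_rw [AffineMap.gradient_eq]
  rw [← map_sum, ← map_sum LinearMap.toContinuousLinearMap, hlinear, map_zero, map_zero]

end Gradient

theorem LinearMap.BilinForm.exists_affineMap_sum_apply_sub_sub_smul {R M N ι : Type*} [CommRing R]
    [AddCommGroup M] [Module R M] [AddCommGroup N] [Module R N] [Fintype ι]
    (B : LinearMap.BilinForm R M) (a : ι → M) (g : ι → N) (hg : ∑ i, g i = 0) :
    ∃ G : M →ᵃ[R] N, ∀ x, ∑ i, B (x - a i) (x - a i) • g i = G x := by
  let L : M →ₗ[R] N := -∑ i, (B.flip (a i) + B (a i)).smulRight (g i)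
  refine ⟨L.toAffineMap + AffineMap.const R M (∑ i, B (a i) (a i) • g i), fun x => ?_⟩
  have hquad : ∑ i, B x x • g i = 0 := by rw [← Finset.smul_sum, hg, smul_zero]
  simp only [L, AffineMap.coe_add, AffineMap.coe_const, Pi.add_apply, Function.const_apply,
    LinearMap.coe_toAffineMap, LinearMap.neg_apply, LinearMap.coe_sum, Finset.sum_apply,
    LinearMap.smulRight_apply, LinearMap.add_apply, LinearMap.BilinForm.flip_apply, map_sub,
    LinearMap.sub_apply, sub_smul, add_smul, Finset.sum_sub_distrib, Finset.sum_add_distrib, hquad]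
  abel

noncomputable def matBilinForm (H : Matrix (Fin 2) (Fin 2) ℝ) :
    LinearMap.BilinForm ℝ (EuclideanSpace ℝ (Fin 2)) :=
  (Matrix.toBilin' H).compl₁₂ (WithLp.linearEquiv 2 ℝ (Fin 2 → ℝ)).toLinearMap
    (WithLp.linearEquiv 2 ℝ (Fin 2 → ℝ)).toLinearMap

theorem matBilinForm_apply (H : Matrix (Fin 2) (Fin 2) ℝ) (v w : EuclideanSpace ℝ (Fin 2)) :
    matBilinForm H v w = matBilin H v w :=
  Matrix.toBilin'_apply H _ _

theorem AffineMap.exists_mvPolynomial_totalDegree_le_one {ι : Type*} [Fintype ι]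
    (f : EuclideanSpace ℝ ι →ᵃ[ℝ] ℝ) :
    ∃ p : MvPolynomial ι ℝ, p.totalDegree ≤ 1 ∧ ∀ x, f x = eval (fun j => x j) p := by
  classical
  refine ⟨C (f 0) + ∑ j, C (f.linear (EuclideanSpace.single j 1)) * X j, ?_, fun x => ?_⟩
  · refine (totalDegree_add _ _).trans (max_le (by simp) ?_)
    refine (totalDegree_finsetSum _ _).trans (Finset.sup_le fun j _ => ?_)
    exact (totalDegree_mul _ _).trans (by simp [totalDegree_X])
  · have hdecomp : f x = f.linear x + f 0 := by
      rw [← sub_eq_iff_eq_add, ← vsub_eq_sub, ← f.linearMap_vsub, vsub_eq_sub, sub_zero]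
    conv_lhs => rw [hdecomp, ← (EuclideanSpace.basisFun ι ℝ).sum_repr x]
    simp [mul_comm, add_comm]

theorem AffineMap.exists_mvPolynomial_norm_sq {ι κ : Type*} [Fintype ι] [Fintype κ]
    (G : EuclideanSpace ℝ ι →ᵃ[ℝ] EuclideanSpace ℝ κ) :
    ∃ P : MvPolynomial ι ℝ, P.totalDegree ≤ 2 ∧ ∀ x, ‖G x‖ ^ 2 = eval (fun j => x j) P := by
  choose p hdeg hp using fun k =>
    ((EuclideanSpace.proj k : EuclideanSpace ℝ κ →L[ℝ] ℝ).toLinearMap.toAffineMap.comp G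
      ).exists_mvPolynomial_totalDegree_le_one
  refine ⟨∑ k, p k ^ 2, ?_, fun x => ?_⟩
  · refine (totalDegree_finsetSum _ _).trans (Finset.sup_le fun k _ => ?_)
    exact (totalDegree_pow _ _).trans (by have := hdeg k; omega)
  · rw [EuclideanSpace.norm_sq_eq]
    simp [← hp]

theorem vector_field_affine_and_norm_sq_quadratic_general
    (a : Fin 3 → EuclideanSpace ℝ (Fin 2))
    (hind : AffineIndependent ℝ a)
    (lam : Fin 3 → (EuclideanSpace ℝ (Fin 2) →ᵃ[ℝ] ℝ))
    (hlam : ∀ i j, lam i (a j) = if i = j then 1 else 0)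
    (g : Fin 3 → EuclideanSpace ℝ (Fin 2))
    (hg : ∀ i x, gradient (fun y => lam i y) x = g i)
    (H : Matrix (Fin 2) (Fin 2) ℝ)
    (F : EuclideanSpace ℝ (Fin 2) → EuclideanSpace ℝ (Fin 2))
    (hF : ∀ x, F x = ∑ i : Fin 3, matBilin H (x - a i) (x - a i) • g i) :
    (∃ G : EuclideanSpace ℝ (Fin 2) →ᵃ[ℝ] EuclideanSpace ℝ (Fin 2), ∀ x, F x = G x) ∧
      ∃ P : MvPolynomial (Fin 2) ℝ, P.totalDegree ≤ 2 ∧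
        ∀ x, ‖F x‖ ^ 2 = MvPolynomial.eval (fun j => x j) P := by
  have hspan : affineSpan ℝ (Set.range a) = ⊤ := by
    rw [hind.affineSpan_eq_top_iff_card_eq_finrank_add_one]
    simp [finrank_euclideanSpace]
  have hg_sum : ∑ i, g i = 0 := by
    simpa only [hg] using sum_gradient_eq_zero_of_sum_eq_one lam
      (AffineMap.sum_eq_const_one_of_apply_eq_ite hspan lam hlam) 0
  obtain ⟨G, hG⟩ := (matBilinForm H).exists_affineMap_sum_apply_sub_sub_smul a g hg_sum
  have hFG : ∀ x, F x = G x := fun x => by simp only [hF, ← hG x, matBilinForm_apply]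
  obtain ⟨P, hP_deg, hP⟩ := G.exists_mvPolynomial_norm_sq
  exact ⟨⟨G, hFG⟩, P, hP_deg, fun x => by rw [hFG, hP]⟩

/-- The vector field `F(x) = Σᵢ [(x − aᵢ) · H (x − aᵢ)] ∇λᵢ` built from the barycentric
coordinates of a nondegenerate triangle is affine, and consequently `x ↦ |F(x)|²` is a
polynomial of total degree at most `2`. -/
theorem vector_field_affine_and_norm_sq_quadratic
    (a : Fin 3 → EuclideanSpace ℝ (Fin 2))
    (hind : AffineIndependent ℝ a)
    (lam : Fin 3 → (EuclideanSpace ℝ (Fin 2) →ᵃ[ℝ] ℝ))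
    (hlam : ∀ i j, lam i (a j) = if i = j then 1 else 0)
    (g : Fin 3 → EuclideanSpace ℝ (Fin 2))
    (hg : ∀ i x, gradient (fun y => lam i y) x = g i)
    (H : Matrix (Fin 2) (Fin 2) ℝ) (hH : H.IsSymm)
    (F : EuclideanSpace ℝ (Fin 2) → EuclideanSpace ℝ (Fin 2))
    (hF : ∀ x, F x = ∑ i : Fin 3, matBilin H (x - a i) (x - a i) • g i) :
    (∃ G : EuclideanSpace ℝ (Fin 2) →ᵃ[ℝ] EuclideanSpace ℝ (Fin 2), ∀ x, F x = G x) ∧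
      ∃ P : MvPolynomial (Fin 2) ℝ, P.totalDegree ≤ 2 ∧
        ∀ x, ‖F x‖ ^ 2 = MvPolynomial.eval (fun j => x j) P :=
  vector_field_affine_and_norm_sq_quadratic_general a hind lam hlam g hg H F hF
end
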